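/- Let f in Q[[q]] be the unique solution of L1 f = 0 with constant coefficient 1. Then for each k in {0,1,2,3} there exists a unique element y = sum_{i=0}^{k} t^i * y_i of Q[[q]][t] (with y_i in Q[[q]]) such that L1~ y = 0, y_k = f, and the constant coefficient of y_i is 0 for every i < k. (These are the normalized solutions I_0, I_1, I_2, I_3 of the Picard-Fuchs equation at the point of maximal unipotent monodromy.) -/

import Mathlib

/-!
Write `y = ∑ tⁱ yᵢ`. Then `D~` acts on coefficients as `D + ∂/∂t`, so for `deg y ≤ d` the
`t^d`-coefficient of `L1~ y` is `L1 y_d`. The coefficients of `L1` vanish at `q = 0` except for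
`D⁴`, whose coefficient is `1` (maximal unipotent monodromy), hence:

* `L1` acts on the `qⁿ`-coefficient as `n⁴` plus terms in lower coefficients, so it is a bijection
  of `q ℚ[[q]]`;
* reducing modulo `q` turns `L1~` into `(∂/∂t)⁴`, which kills `y` when `deg y ≤ 3`, so then every
  coefficient of `L1~ y` lies in `q ℚ[[q]]`.

Starting from `t^k f`, the coefficients `y_{k-1}, …, y_0` are therefore found one at a time by
solving `L1 y_j = -(t^j-coefficient of L1~ y)` in `q ℚ[[q]]`. Uniqueness: the leading coefficient
of the difference of two solutions is killed by `L1` and lies in `q ℚ[[q]]`, so it is zero.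
-/

open PowerSeries

/-- The operator `D = q * d/dq` on `ℚ[[q]]`. -/
noncomputable def Dop (f : ℚ⟦X⟧) : ℚ⟦X⟧ := X * derivative ℚ f

/-- Coefficient of `D^4` in the Picard-Fuchs operator. -/
noncomputable def A4 : ℚ⟦X⟧ := (1 - 289 * X - 57 * X ^ 2 + X ^ 3) * (1 - 3 * X) ^ 2
/-- Coefficient of `D^3` in the Picard-Fuchs operator. -/
noncomputable def A3 : ℚ⟦X⟧ := 4 * X * (3 * X - 1) * (143 + 57 * X - 87 * X ^ 2 + 3 * X ^ 3)
/-- Coefficient of `D^2` in the Picard-Fuchs operator. -/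
noncomputable def A2 : ℚ⟦X⟧ :=
  2 * X * (-212 - 473 * X + 725 * X ^ 2 - 435 * X ^ 3 + 27 * X ^ 4)
/-- Coefficient of `D^1` in the Picard-Fuchs operator. -/
noncomputable def A1 : ℚ⟦X⟧ :=
  2 * X * (-69 - 481 * X + 159 * X ^ 2 - 171 * X ^ 3 + 18 * X ^ 4)
/-- Coefficient of `D^0` in the Picard-Fuchs operator. -/
noncomputable def A0 : ℚ⟦X⟧ := X * (-17 - 202 * X - 8 * X ^ 2 - 54 * X ^ 3 + 9 * X ^ 4)

/-- The Picard-Fuchs operator of Rødland's mirror family of the Pfaffian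
Calabi-Yau 3-fold, acting on `ℚ[[q]]` (here `q` is `PowerSeries.X`). -/
noncomputable def L1 (f : ℚ⟦X⟧) : ℚ⟦X⟧ :=
  A4 * Dop^[4] f + A3 * Dop^[3] f + A2 * Dop^[2] f + A1 * Dop f + A0 * f

/-- The extension of `D` to the derivation on `ℚ[[q]][t]` with `D t = 1`
(where `t` plays the role of `ln q`). -/
noncomputable def Dt (y : Polynomial ℚ⟦X⟧) : Polynomial ℚ⟦X⟧ :=
  Polynomial.derivative y + y.sum fun n a => Polynomial.C (Dop a) * Polynomial.X ^ n

/-- The Picard-Fuchs operator acting on `ℚ[[q]][t]`, with `D` replaced by its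
extension `Dt`. -/
noncomputable def L1t (y : Polynomial ℚ⟦X⟧) : Polynomial ℚ⟦X⟧ :=
    Polynomial.C A4 * Dt^[4] y + Polynomial.C A3 * Dt^[3] y
  + Polynomial.C A2 * Dt^[2] y + Polynomial.C A1 * Dt y + Polynomial.C A0 * y

open Finset

section LowerTriangular

variable {K : Type*} [Field K]

noncomputable def lowerTriangularSolve (a : ℕ → ℕ → K) (g : K⟦X⟧) (n : ℕ) : K :=
  (coeff n g - ∑ j : Fin n, a (n - j) j * lowerTriangularSolve a g j) / a 0 n
decreasing_by exact j.isLt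

lemma sum_antidiagonal_eq_add_sum_range {M : Type*} [AddCommMonoid M] (F : ℕ → ℕ → M) (n : ℕ) :
    ∑ p ∈ antidiagonal n, F p.1 p.2 = F 0 n + ∑ j ∈ range n, F (n - j) j := by
  rw [← Finset.Nat.sum_antidiagonal_swap]
  simp only [Prod.fst_swap, Prod.snd_swap]
  rw [Finset.Nat.sum_antidiagonal_eq_sum_range_succ (fun i j => F j i), sum_range_succ,
    Nat.sub_self, add_comm]

/-- An operator `L = ∑ᵢ Xⁱ Pᵢ(D)` acts on coefficients through `a i j = Pᵢ(j)`, so it is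
triangular with diagonal the indicial polynomial `P₀`. -/
theorem existsUnique_of_coeff_eq_sum_antidiagonal (L : K⟦X⟧ → K⟦X⟧) (a : ℕ → ℕ → K)
    (hL : ∀ u n, coeff n (L u) = ∑ p ∈ antidiagonal n, a p.1 p.2 * coeff p.2 u)
    (ha : ∀ n, n ≠ 0 → a 0 n ≠ 0) {g : K⟦X⟧} (hg : constantCoeff g = 0) :
    ∃! u : K⟦X⟧, constantCoeff u = 0 ∧ L u = g := by
  have hL' : ∀ u n, coeff n (L u) =
      a 0 n * coeff n u + ∑ j ∈ range n, a (n - j) j * coeff j u := fun u n => by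
    rw [hL, sum_antidiagonal_eq_add_sum_range (fun i j => a i j * coeff j u)]
  have hsol0 : lowerTriangularSolve a g 0 = 0 := by
    rw [lowerTriangularSolve]; simp [hg]
  refine ⟨mk (lowerTriangularSolve a g), ⟨by simpa using hsol0, ?_⟩, ?_⟩
  · ext n
    rw [hL']
    simp only [coeff_mk]
    rcases eq_or_ne n 0 with rfl | hn
    · simp [hsol0, hg]
    · rw [lowerTriangularSolve, Fin.sum_univ_eq_sum_range (fun j => a (n - j) j * _)]
      field_simp [ha n hn]
      ring
  · rintro v ⟨hv0, hv⟩
    ext n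
    induction n using Nat.strong_induction_on with
    | _ n ih =>
      rcases eq_or_ne n 0 with rfl | hn
      · simpa [hsol0] using hv0
      have hsum : ∑ j ∈ range n, a (n - j) j * coeff j v =
          ∑ j ∈ range n, a (n - j) j * lowerTriangularSolve a g j :=
        sum_congr rfl fun j hj => by rw [ih j (mem_range.mp hj), coeff_mk]
      have hcoeff : coeff n g = a 0 n * coeff n v + ∑ j ∈ range n, a (n - j) j * coeff j v := by
        rw [← hv, hL']
      rw [coeff_mk, lowerTriangularSolve, Fin.sum_univ_eq_sum_range (fun j => a (n - j) j * _),
        hcoeff, hsum, add_sub_cancel_right, mul_div_cancel_left₀ _ (ha n hn)]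

end LowerTriangular

section PowerSeriesOperator

lemma Dop_add (f g : ℚ⟦X⟧) : Dop (f + g) = Dop f + Dop g := by
  simp only [Dop, map_add, mul_add]

lemma coeff_Dop (f : ℚ⟦X⟧) (n : ℕ) : coeff n (Dop f) = n * coeff n f := by
  cases n with
  | zero => simp [Dop]
  | succ n => rw [Dop, coeff_succ_X_mul, coeff_derivative]; push_cast; ring

lemma coeff_Dop_iterate (m : ℕ) (f : ℚ⟦X⟧) (n : ℕ) :
    coeff n (Dop^[m] f) = (n : ℚ) ^ m * coeff n f := by
  induction m with
  | zero => simp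
  | succ m ih => rw [Function.iterate_succ_apply', coeff_Dop, ih]; ring

lemma constantCoeff_Dop (f : ℚ⟦X⟧) : constantCoeff (Dop f) = 0 := by
  simp [Dop]

lemma coeff_mul_Dop_iterate (A f : ℚ⟦X⟧) (m n : ℕ) :
    coeff n (A * Dop^[m] f) = ∑ p ∈ antidiagonal n, coeff p.1 A * p.2 ^ m * coeff p.2 f := by
  simp only [coeff_mul, coeff_Dop_iterate, mul_assoc]

/-- `L1 = ∑ᵢ Xⁱ Pᵢ(D)` with `Pᵢ(j) = L1symbol i j`. -/
noncomputable def L1symbol (i j : ℕ) : ℚ :=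
  coeff i A4 * j ^ 4 + coeff i A3 * j ^ 3 + coeff i A2 * j ^ 2 + coeff i A1 * j + coeff i A0

lemma coeff_L1 (u : ℚ⟦X⟧) (n : ℕ) :
    coeff n (L1 u) = ∑ p ∈ antidiagonal n, L1symbol p.1 p.2 * coeff p.2 u := by
  have h1 : A1 * Dop u = A1 * Dop^[1] u := rfl
  have h0 : A0 * u = A0 * Dop^[0] u := rfl
  simp only [L1, h1, h0, map_add, coeff_mul_Dop_iterate, ← sum_add_distrib]
  refine sum_congr rfl fun p _ => ?_
  rw [L1symbol]
  ring

lemma L1symbol_zero (j : ℕ) : L1symbol 0 j = (j : ℚ) ^ 4 := by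
  simp [L1symbol, A4, A3, A2, A1, A0]

theorem L1_existsUnique {g : ℚ⟦X⟧} (hg : constantCoeff g = 0) :
    ∃! u : ℚ⟦X⟧, constantCoeff u = 0 ∧ L1 u = g :=
  existsUnique_of_coeff_eq_sum_antidiagonal L1 L1symbol coeff_L1
    (fun n hn => by rw [L1symbol_zero]; exact pow_ne_zero 4 (Nat.cast_ne_zero.mpr hn)) hg

lemma L1_zero : L1 0 = 0 := by
  ext n
  simp [coeff_L1]

end PowerSeriesOperator

section LogarithmicOperator

lemma coeff_Dt (y : Polynomial ℚ⟦X⟧) (j : ℕ) :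
    (Dt y).coeff j = Dop (y.coeff j) + (j + 1) * y.coeff (j + 1) := by
  have hsum : (y.sum fun n a => Polynomial.C (Dop a) * Polynomial.X ^ n).coeff j =
      Dop (y.coeff j) := by
    rw [Polynomial.sum, Polynomial.finsetSum_coeff]
    simp only [Polynomial.coeff_C_mul, Polynomial.coeff_X_pow, mul_ite, mul_one, mul_zero,
      sum_ite_eq]
    split_ifs with hj
    · rfl
    · rw [Polynomial.notMem_support_iff.mp hj, Dop, map_zero, mul_zero]
  rw [Dt, Polynomial.coeff_add, hsum, Polynomial.coeff_derivative, mul_comm]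
  ring

lemma Dt_add (y z : Polynomial ℚ⟦X⟧) : Dt (y + z) = Dt y + Dt z := by
  ext1 j
  simp only [coeff_Dt, Polynomial.coeff_add, Dop_add]
  ring

lemma Dt_iterate_add (m : ℕ) (y z : Polynomial ℚ⟦X⟧) : Dt^[m] (y + z) = Dt^[m] y + Dt^[m] z :=
  iterate_map_add (AddMonoidHom.mk' Dt Dt_add) m y z

lemma L1t_add (y z : Polynomial ℚ⟦X⟧) : L1t (y + z) = L1t y + L1t z := by
  simp only [L1t, Dt_iterate_add, Dt_add, mul_add]
  abel

lemma L1t_sub (y z : Polynomial ℚ⟦X⟧) : L1t (y - z) = L1t y - L1t z :=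
  map_sub (AddMonoidHom.mk' L1t L1t_add) y z

lemma natDegree_Dt_le {y : Polynomial ℚ⟦X⟧} {d : ℕ} (hy : y.natDegree ≤ d) :
    (Dt y).natDegree ≤ d := by
  rw [Polynomial.natDegree_le_iff_coeff_eq_zero] at hy ⊢
  intro j hj
  rw [coeff_Dt, hy j hj, hy (j + 1) (by omega), Dop, map_zero, mul_zero, mul_zero, add_zero]

lemma coeff_Dt_of_natDegree_le {y : Polynomial ℚ⟦X⟧} {d : ℕ} (hy : y.natDegree ≤ d) :
    (Dt y).coeff d = Dop (y.coeff d) := by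
  rw [coeff_Dt, Polynomial.coeff_eq_zero_of_natDegree_lt (n := d + 1) (by omega), mul_zero,
    add_zero]

lemma natDegree_Dt_iterate_le {y : Polynomial ℚ⟦X⟧} {d : ℕ} (hy : y.natDegree ≤ d) (m : ℕ) :
    (Dt^[m] y).natDegree ≤ d := by
  induction m with
  | zero => exact hy
  | succ m ih => rw [Function.iterate_succ_apply']; exact natDegree_Dt_le ih

lemma coeff_Dt_iterate_of_natDegree_le {y : Polynomial ℚ⟦X⟧} {d : ℕ} (hy : y.natDegree ≤ d)
    (m : ℕ) : (Dt^[m] y).coeff d = Dop^[m] (y.coeff d) := by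
  induction m with
  | zero => rfl
  | succ m ih =>
    rw [Function.iterate_succ_apply', Function.iterate_succ_apply',
      coeff_Dt_of_natDegree_le (natDegree_Dt_iterate_le hy m), ih]

lemma natDegree_L1t_le {y : Polynomial ℚ⟦X⟧} {d : ℕ} (hy : y.natDegree ≤ d) :
    (L1t y).natDegree ≤ d := by
  have hterm : ∀ (A : ℚ⟦X⟧) (m : ℕ), (Polynomial.C A * Dt^[m] y).natDegree ≤ d := fun A m =>
    Polynomial.natDegree_C_mul_le A _ |>.trans (natDegree_Dt_iterate_le hy m)
  exact Polynomial.natDegree_add_le_of_degree_le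
    (Polynomial.natDegree_add_le_of_degree_le
      (Polynomial.natDegree_add_le_of_degree_le
        (Polynomial.natDegree_add_le_of_degree_le (hterm A4 4) (hterm A3 3)) (hterm A2 2))
      (hterm A1 1)) (hterm A0 0)

lemma coeff_L1t_of_natDegree_le {y : Polynomial ℚ⟦X⟧} {d : ℕ} (hy : y.natDegree ≤ d) :
    (L1t y).coeff d = L1 (y.coeff d) := by
  simp only [L1t, L1, Polynomial.coeff_add, Polynomial.coeff_C_mul,
    coeff_Dt_iterate_of_natDegree_le hy]
  rw [coeff_Dt_of_natDegree_le hy]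

lemma map_constantCoeff_Dt (y : Polynomial ℚ⟦X⟧) :
    (Dt y).map constantCoeff = Polynomial.derivative (y.map constantCoeff) := by
  ext1 j
  simp [coeff_Dt, constantCoeff_Dop, Polynomial.coeff_derivative, mul_comm]

lemma map_constantCoeff_L1t (y : Polynomial ℚ⟦X⟧) :
    (L1t y).map constantCoeff = Polynomial.derivative^[4] (y.map constantCoeff) := by
  simp [L1t, map_constantCoeff_Dt, A4, A3, A2, A1, A0]

lemma constantCoeff_coeff_L1t {y : Polynomial ℚ⟦X⟧} (hy : y.natDegree ≤ 3) (i : ℕ) :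
    constantCoeff ((L1t y).coeff i) = 0 := by
  rw [← Polynomial.coeff_map, map_constantCoeff_L1t,
    Polynomial.iterate_derivative_eq_zero (Polynomial.natDegree_map_le.trans_lt (by omega)),
    Polynomial.coeff_zero]

end LogarithmicOperator

section NormalizedSolutions

lemma eq_zero_of_L1t_eq_zero {z : Polynomial ℚ⟦X⟧} (hz : L1t z = 0)
    (h0 : ∀ i, constantCoeff (z.coeff i) = 0) : z = 0 := by
  have htop : L1 z.leadingCoeff = 0 := by
    rw [Polynomial.leadingCoeff, ← coeff_L1t_of_natDegree_le le_rfl, hz, Polynomial.coeff_zero]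
  have hlead : z.leadingCoeff = 0 :=
    (L1_existsUnique (map_zero constantCoeff)).unique ⟨h0 _, htop⟩ ⟨map_zero _, L1_zero⟩
  exact Polynomial.leadingCoeff_eq_zero.mp hlead

lemma exists_normalized_L1t_coeff_eq_zero_of_le {f : ℚ⟦X⟧} (hf : L1 f = 0) {k : ℕ} (hk : k ≤ 3)
    {j : ℕ} (hj : j ≤ k) :
    ∃ y : Polynomial ℚ⟦X⟧, y.natDegree ≤ k ∧ y.coeff k = f ∧
      (∀ i < k, constantCoeff (y.coeff i) = 0) ∧ ∀ i, j ≤ i → (L1t y).coeff i = 0 := by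
  induction hj using Nat.decreasingInduction with
  | self =>
    have hdeg := Polynomial.natDegree_C_mul_X_pow_le f k
    refine ⟨Polynomial.C f * Polynomial.X ^ k, hdeg, by simp, fun i hi => by simp [hi.ne],
      fun i hi => ?_⟩
    rcases hi.eq_or_lt with rfl | hlt
    · rw [coeff_L1t_of_natDegree_le hdeg]
      simp [hf]
    · exact Polynomial.coeff_eq_zero_of_natDegree_lt ((natDegree_L1t_le hdeg).trans_lt hlt)
  | of_succ j hjk ih =>
    obtain ⟨y, hdeg, htop, hlow, hL⟩ := ih
    obtain ⟨u, ⟨hu0, hu⟩, -⟩ := L1_existsUnique (g := -(L1t y).coeff j)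
      (by rw [map_neg, constantCoeff_coeff_L1t (hdeg.trans hk), neg_zero])
    have hdeg_u := Polynomial.natDegree_C_mul_X_pow_le u j
    refine ⟨y + Polynomial.C u * Polynomial.X ^ j,
      Polynomial.natDegree_add_le_of_degree_le hdeg (hdeg_u.trans hjk.le),
      by simp [htop, hjk.ne'], fun i hi => ?_, fun i hi => ?_⟩
    · rcases eq_or_ne i j with rfl | hij
      · simp [hlow i hi, hu0]
      · simp [hlow i hi, hij]
    · rw [L1t_add, Polynomial.coeff_add]
      rcases hi.eq_or_lt with rfl | hlt
      · rw [coeff_L1t_of_natDegree_le hdeg_u]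
        simp [hu]
      · rw [hL i hlt, zero_add]
        exact Polynomial.coeff_eq_zero_of_natDegree_lt ((natDegree_L1t_le hdeg_u).trans_lt hlt)

end NormalizedSolutions

theorem pfaffian_normalized_solutions_existsUnique_general (f : ℚ⟦X⟧) (hf : L1 f = 0) :
    ∀ k : ℕ, k ≤ 3 →
      ∃! y : Polynomial ℚ⟦X⟧,
        L1t y = 0 ∧ y.degree ≤ k ∧ y.coeff k = f ∧
          ∀ i < k, constantCoeff (y.coeff i) = 0 := by
  intro k hk
  obtain ⟨y, hdeg, htop, hlow, hL⟩ := exists_normalized_L1t_coeff_eq_zero_of_le hf hk k.zero_le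
  have hL0 : L1t y = 0 := Polynomial.ext fun i => hL i i.zero_le
  refine ⟨y, ⟨hL0, Polynomial.natDegree_le_iff_degree_le.mp hdeg, htop, hlow⟩, ?_⟩
  rintro y' ⟨hL', hdeg', htop', hlow'⟩
  have hagree : ∀ i, k ≤ i → y'.coeff i = y.coeff i := fun i hi => by
    rcases hi.eq_or_lt with rfl | hlt
    · rw [htop, htop']
    · rw [Polynomial.coeff_eq_zero_of_degree_lt (hdeg'.trans_lt (by exact_mod_cast hlt)),
        Polynomial.coeff_eq_zero_of_natDegree_lt (hdeg.trans_lt hlt)]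
  refine sub_eq_zero.mp (eq_zero_of_L1t_eq_zero (by rw [L1t_sub, hL', hL0, sub_zero]) fun i => ?_)
  rw [Polynomial.coeff_sub, map_sub]
  rcases lt_or_ge i k with hi | hi
  · rw [hlow' i hi, hlow i hi, sub_zero]
  · rw [hagree i hi, sub_self]

/-- For each `k ∈ {0,1,2,3}` there is a unique solution `y = Σ_{i=0}^{k} t^i y_i` of the
Picard-Fuchs equation on `ℚ[[q]][t]` with top coefficient `y_k = f` (the holomorphic
solution) and all lower coefficients vanishing at `q = 0`; these are the normalized
solutions `I₀, I₁, I₂, I₃` at the point of maximal unipotent monodromy. -/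
theorem pfaffian_normalized_solutions_existsUnique (f : ℚ⟦X⟧)
    (hf₀ : constantCoeff f = 1) (hf : L1 f = 0) :
    ∀ k : ℕ, k ≤ 3 →
      ∃! y : Polynomial ℚ⟦X⟧,
        L1t y = 0 ∧ y.degree ≤ k ∧ y.coeff k = f ∧
          ∀ i < k, constantCoeff (y.coeff i) = 0 :=
  pfaffian_normalized_solutions_existsUnique_general f hf
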